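/- arXiv:2005.06652 — 6 statements merged into one kernel-verified Lean document; each statement's English description precedes it below -/
import Mathlib

section
/- Let n ≥ 2 and let Γ be a group that admits a transitive action on [n] = {1,…,n}. Then there exists a function f : Γ → Sym(n−1) such that defect_∞(f) ≤ 2/(n−1), but for every group homomorphism h : Γ → Sym(n−1) there exists γ ∈ Γ with d^H(f(γ), h(γ)) ≥ 1/2 − 1/(n−1). -/
open Finset

/-- Extend a permutation of `Fin n` to a partial function `ℕ → Option ℕ`
(`none` playing the role of the dummy symbol `⋆`). -/
def permExt {n : ℕ} (σ : Equiv.Perm (Fin n)) : ℕ → Option ℕ :=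
  fun x => if h : x < n then some ((σ ⟨x, h⟩ : Fin n) : ℕ) else none

/-- The (extended) normalized Hamming distance between permutations of possibly
different sizes.  For `n = N` it is `|{x : σ x ≠ τ x}| / n`; for `n ≤ N` it is
`(|{x ∈ [n] : σ x ≠ τ x}| + (N - n)) / N`. -/
noncomputable def dH {n N : ℕ} (σ : Equiv.Perm (Fin n)) (τ : Equiv.Perm (Fin N)) : ℝ :=
  (((Finset.range (max n N)).filter fun x => permExt σ x ≠ permExt τ x).card : ℝ)
    / ((max n N : ℕ) : ℝ)

/-- The uniform local defect of a map into a symmetric group. -/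
noncomputable def defectInfty {Γ : Type*} [Group Γ] {n : ℕ}
    (f : Γ → Equiv.Perm (Fin n)) : ℝ :=
  ⨆ p : Γ × Γ, dH (f (p.1 * p.2)) (f p.1 * f p.2)

/-- The uniform distance between two maps into (possibly different) symmetric groups. -/
noncomputable def dInfty {Γ : Type*} {n N : ℕ}
    (f : Γ → Equiv.Perm (Fin n)) (h : Γ → Equiv.Perm (Fin N)) : ℝ :=
  ⨆ γ : Γ, dH (f γ) (h γ)

/-- A finitely-additive probability measure on (the power set of) `Γ`. -/
def IsFinAddProb {Γ : Type*} (m : Set Γ → ℝ) : Prop :=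
  (∀ A : Set Γ, 0 ≤ m A ∧ m A ≤ 1) ∧ m Set.univ = 1 ∧
    ∀ A B : Set Γ, Disjoint A B → m (A ∪ B) = m A + m B

/-- Left invariance of a finitely-additive measure. -/
def LeftInvariant {Γ : Type*} [Group Γ] (m : Set Γ → ℝ) : Prop :=
  ∀ (γ : Γ) (A : Set Γ), m ((fun a => γ * a) '' A) = m A

/-- Right invariance of a finitely-additive measure. -/
def RightInvariant {Γ : Type*} [Group Γ] (m : Set Γ → ℝ) : Prop :=
  ∀ (γ : Γ) (A : Set Γ), m ((fun a => a * γ) '' A) = m A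

/-- Inverse invariance of a finitely-additive measure. -/
def InvInvariant {Γ : Type*} [Group Γ] (m : Set Γ → ℝ) : Prop :=
  ∀ A : Set Γ, m A⁻¹ = m A

/-- A discrete group is amenable if it admits a left-invariant finitely-additive
probability measure. -/
def IsAmenable (Γ : Type*) [Group Γ] : Prop :=
  ∃ m : Set Γ → ℝ, IsFinAddProb m ∧ LeftInvariant m

/-- A function between groups is symmetric if it sends `1 ↦ 1` and respects inverses. -/
def IsSymmetricMap {Γ G : Type*} [Group Γ] [Group G] (f : Γ → G) : Prop :=
  f 1 = 1 ∧ ∀ γ : Γ, f γ⁻¹ = (f γ)⁻¹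

/-- The weight `w(x →γ→ y)` : the measure of the set of supporters
`T(x →γ→ y) = { t : f(t)(f(t⁻¹γ)(x)) = y }`. -/
def weight {Γ : Type*} [Group Γ] {n : ℕ} (m : Set Γ → ℝ)
    (f : Γ → Equiv.Perm (Fin n)) (x : Fin n) (γ : Γ) (y : Fin n) : ℝ :=
  m { t : Γ | f t (f (t⁻¹ * γ) x) = y }

/-!
Take `f γ = dropZero (φ γ)`: `φ γ` with the point `0` removed by a transposition. Removing a
point changes at most two values of a product, whence the defect bound. If a homomorphism `h` were
closer to `f` than claimed, then for every `γ` we would have `φ γ (x + 1) = h γ x + 1` for more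
than half of the `x`. Let `G` be the finite image of `(φ, h)`, acting on
`[n] × [n-1]`. Every `G`-orbit there maps onto the transitive `[n]` and is a multiple of its image
in `[n-1]`, hence at least twice that image, so it meets the graph of `x ↦ x + 1` in at most half
its points. Counting pairs `(g, y)` with `g • (y + 1, y)` on the graph, the agreement averaged over
`G` is at most `(n-1)/2`.
-/

theorem dH_eq_card_filter_ne_div {N : ℕ} (σ τ : Equiv.Perm (Fin N)) :
    dH σ τ = (#{x | σ x ≠ τ x} : ℝ) / N := by
  have hext (π : Equiv.Perm (Fin N)) (x : Fin N) : permExt π x = some (π x : ℕ) :=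
    dif_pos x.isLt
  rw [dH, max_self, ← Nat.Iio_eq_range, ← Fin.map_valEmbedding_univ, filter_map, card_map]
  simp [hext, Fin.val_inj]

section OrbitCounting

open MulAction

variable {G X Y : Type*} [Group G] [MulAction G X] [MulAction G Y]

theorem ncard_setOf_smul_mem (x : X) (s : Set X) :
    {g : G | g • x ∈ s}.ncard = (orbit G x ∩ s).ncard * Nat.card (stabilizer G x) := by
  have : {g : G // g • x ∈ s} ≃ {z : orbit G x // (z : X) ∈ s} × stabilizer G x :=
    ((orbitProdStabilizerEquivGroup G x).symm.subtypeEquiv (p := fun g => g • x ∈ s) (q := fun z => (z.1 : X) ∈ s) fun _ => Iff.rfl).trans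
      (Equiv.prodSubtypeFstEquivSubtypeProd (p := fun z : orbit G x => (z : X) ∈ s))
  rw [← Nat.card_coe_set_eq, ← Nat.card_coe_set_eq, ← Nat.card_prod]
  exact Nat.card_congr <| this.trans <|
    Equiv.prodCongr (Equiv.subtypeSubtypeEquivSubtypeInter _ _) (Equiv.refl _)

theorem ncard_orbit_dvd_ncard_orbit_prod_fst (x : X) (y : Y) :
    (orbit G x).ncard ∣ (orbit G (x, y)).ncard := by
  rw [← index_stabilizer, ← index_stabilizer]
  exact Subgroup.index_dvd_of_le fun g hg => congrArg Prod.fst hg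

theorem ncard_orbit_dvd_ncard_orbit_prod_snd (x : X) (y : Y) :
    (orbit G y).ncard ∣ (orbit G (x, y)).ncard := by
  rw [← index_stabilizer, ← index_stabilizer]
  exact Subgroup.index_dvd_of_le fun g hg => congrArg Prod.snd hg

/-- The orbit of `p` is a multiple of the orbit of `p.2` but, mapping onto `X`, strictly larger than
it; so it is at least twice as large, while it meets the graph of `ι` in at most `|orbit p.2|`
points. -/
theorem two_mul_ncard_orbit_inter_graph_le [Finite X] [Finite Y] [IsPretransitive G X]
    (hXY : Nat.card Y < Nat.card X) (ι : Y → X) (p : X × Y) :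
    2 * (orbit G p ∩ Set.range fun y => (ι y, y)).ncard ≤ (orbit G p).ncard := by
  have hgraph : (orbit G p ∩ Set.range fun y => (ι y, y)).ncard ≤ (orbit G p.2).ncard := by
    refine Set.ncard_le_ncard_of_injOn Prod.snd ?_ ?_
    · rintro _ ⟨⟨g, rfl⟩, -⟩
      exact ⟨g, rfl⟩
    · rintro _ ⟨-, y, rfl⟩ _ ⟨-, y', rfl⟩ h
      simp_all
  have hY : (orbit G p.2).ncard ≤ Nat.card Y := Set.ncard_le_card _
  have hX : Nat.card X ≤ (orbit G p).ncard := by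
    rw [← index_stabilizer_of_transitive G p.1, index_stabilizer]
    exact Nat.le_of_dvd ((Set.ncard_pos (Set.toFinite _)).mpr ⟨p, mem_orbit_self p⟩)
      (ncard_orbit_dvd_ncard_orbit_prod_fst p.1 p.2)
  obtain ⟨k, hk⟩ := ncard_orbit_dvd_ncard_orbit_prod_snd (G := G) p.1 p.2
  rw [hk] at hX ⊢
  rcases k with _ | _ | k
  · omega
  · omega
  · nlinarith

theorem exists_two_mul_card_filter_smul_eq_le [Fintype G] [Fintype X] [Fintype Y] [DecidableEq X]
    [IsPretransitive G X] (hXY : Fintype.card Y < Fintype.card X) (ι : Y → X) :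
    ∃ g : G, 2 * #{y | g • ι y = ι (g • y)} ≤ Fintype.card Y := by
  have hpoint (y : Y) : 2 * #{g : G | g • ι y = ι (g • y)} ≤ Fintype.card G := by
    have hset : ({g : G | g • ι y = ι (g • y)} : Finset G) =
        {g : G | g • (ι y, y) ∈ Set.range fun y => (ι y, y)} := by
      ext g
      simp [eq_comm]
    have hG := ncard_setOf_smul_mem (G := G) (ι y, y) Set.univ
    simp only [Set.mem_univ, Set.ofPred_true, Set.ncard_univ, Nat.card_eq_fintype_card,
      Set.inter_univ] at hG
    rw [← Set.ncard_coe_finset, hset, ncard_setOf_smul_mem, hG, ← mul_assoc]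
    gcongr
    exact two_mul_ncard_orbit_inter_graph_le (by simpa using hXY) ι _
  have hsum : ∑ g : G, 2 * #{y | g • ι y = ι (g • y)} ≤ ∑ _g : G, Fintype.card Y :=
    calc ∑ g : G, 2 * #{y | g • ι y = ι (g • y)}
        = ∑ y : Y, 2 * #{g : G | g • ι y = ι (g • y)} := by
          rw [← mul_sum, ← mul_sum]
          exact congrArg (2 * ·) (sum_card_bipartiteAbove_eq_sum_card_bipartiteBelow _)
      _ ≤ ∑ _y : Y, Fintype.card G := sum_le_sum fun y _ => hpoint y
      _ = ∑ _g : G, Fintype.card Y := by simp [mul_comm]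
  obtain ⟨g, -, hg⟩ := exists_le_of_sum_le univ_nonempty hsum
  exact ⟨g, hg⟩

end OrbitCounting

theorem exists_two_mul_card_filter_apply_eq_le {Γ X Y : Type*} [Group Γ] [Fintype X] [Fintype Y]
    [DecidableEq X] (φ : Γ →* Equiv.Perm X) (ψ : Γ →* Equiv.Perm Y)
    (hφ : ∀ x x' : X, ∃ γ : Γ, φ γ x = x') (hXY : Fintype.card Y < Fintype.card X) (ι : Y → X) :
    ∃ γ : Γ, 2 * #{y | φ γ (ι y) = ι (ψ γ y)} ≤ Fintype.card Y := by
  let G := (φ.prod ψ).range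
  let _ : MulAction G X := .compHom X ((MonoidHom.fst _ _).comp G.subtype)
  let _ : MulAction G Y := .compHom Y ((MonoidHom.snd _ _).comp G.subtype)
  have : MulAction.IsPretransitive G X :=
    ⟨fun x x' => (hφ x x').elim fun γ hγ => ⟨⟨φ.prod ψ γ, γ, rfl⟩, hγ⟩⟩
  have : Fintype G := Fintype.ofFinite G
  obtain ⟨⟨_, γ, rfl⟩, hγ⟩ := exists_two_mul_card_filter_smul_eq_le (G := G) hXY ι
  exact ⟨γ, hγ⟩

/-- `σ` followed by the transposition of `0` and `σ 0` fixes `0`; `dropZero σ` is the induced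
permutation of the remaining points `1, …, N`. -/
def dropZero {N : ℕ} (σ : Equiv.Perm (Fin (N + 1))) : Equiv.Perm (Fin N) :=
  (Equiv.Perm.decomposeFin σ).2

theorem succ_dropZero_apply {N : ℕ} (σ : Equiv.Perm (Fin (N + 1))) (x : Fin N) :
    (dropZero σ x).succ = Equiv.swap 0 (σ 0) (σ x.succ) := by
  obtain ⟨⟨p, τ⟩, rfl⟩ := Equiv.Perm.decomposeFin.symm.surjective σ
  simp [dropZero]

theorem succ_dropZero_apply_of_ne {N : ℕ} {σ : Equiv.Perm (Fin (N + 1))} {x : Fin N}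
    (h : σ x.succ ≠ 0) : (dropZero σ x).succ = σ x.succ := by
  rw [succ_dropZero_apply]
  exact Equiv.swap_apply_of_ne_of_ne h (σ.injective.ne (Fin.succ_ne_zero x))

theorem card_filter_apply_succ_eq_le_one {N : ℕ} (σ : Equiv.Perm (Fin (N + 1))) (a : Fin (N + 1)) :
    #{x : Fin N | σ x.succ = a} ≤ 1 :=
  card_le_one.mpr fun _ hx _ hy =>
    Fin.succ_injective _ (σ.injective ((mem_filter.mp hx).2.trans (mem_filter.mp hy).2.symm))

theorem card_filter_dropZero_mul_ne_le_two {N : ℕ} (σ τ : Equiv.Perm (Fin (N + 1))) :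
    #{x | dropZero (σ * τ) x ≠ (dropZero σ * dropZero τ) x} ≤ 2 := by
  have hsub : ({x | dropZero (σ * τ) x ≠ (dropZero σ * dropZero τ) x} : Finset (Fin N)) ⊆
      ({x | τ x.succ = 0} : Finset (Fin N)) ∪
        ({x | (σ * τ) x.succ = 0} : Finset (Fin N)) := by
    intro x hx
    simp only [mem_union, mem_filter, mem_univ, true_and] at hx ⊢
    by_contra! h
    have hτ := succ_dropZero_apply_of_ne h.1
    apply hx
    apply Fin.succ_injective
    rw [Equiv.Perm.mul_apply, succ_dropZero_apply_of_ne h.2,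
      succ_dropZero_apply_of_ne (by rw [hτ]; exact h.2), hτ, Equiv.Perm.mul_apply]
  calc _ ≤ _ := card_le_card hsub
    _ ≤ _ := card_union_le _ _
    _ ≤ 1 + 1 := add_le_add (card_filter_apply_succ_eq_le_one _ _)
        (card_filter_apply_succ_eq_le_one _ _)

theorem card_filter_dropZero_apply_eq_le {N : ℕ} (σ : Equiv.Perm (Fin (N + 1)))
    (τ : Equiv.Perm (Fin N)) :
    #{x | dropZero σ x = τ x} ≤ #{x | σ x.succ = (τ x).succ} + 1 := by
  have hsub : ({x | dropZero σ x = τ x} : Finset (Fin N)) ⊆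
      ({x | σ x.succ = (τ x).succ} : Finset (Fin N)) ∪
        ({x | σ x.succ = 0} : Finset (Fin N)) := by
    intro x hx
    simp only [mem_union, mem_filter, mem_univ, true_and] at hx ⊢
    by_contra! h
    exact h.1 (hx ▸ (succ_dropZero_apply_of_ne h.2).symm)
  exact (card_le_card hsub).trans
    ((card_union_le _ _).trans (add_le_add_right (card_filter_apply_succ_eq_le_one σ 0) _))

/-- If `n ≥ 2` and `Γ` admits a transitive action on `[n]`, then there is
`f : Γ → Sym(n-1)` with `defect_∞(f) ≤ 2/(n-1)` which is `(1/2 - 1/(n-1))`-far from every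
homomorphism `Γ → Sym(n-1)`. -/
theorem statement0 {Γ : Type*} [Group Γ] (n : ℕ) (hn : 2 ≤ n)
    (φ : Γ →* Equiv.Perm (Fin n)) (hφ : ∀ x y : Fin n, ∃ γ : Γ, φ γ x = y) :
    ∃ f : Γ → Equiv.Perm (Fin (n - 1)),
      defectInfty f ≤ 2 / ((n : ℝ) - 1) ∧
      ∀ h : Γ →* Equiv.Perm (Fin (n - 1)),
        ∃ γ : Γ, dH (f γ) (h γ) ≥ 1 / 2 - 1 / ((n : ℝ) - 1) := by
  obtain ⟨N, rfl⟩ : ∃ N, n = N + 1 := ⟨n - 1, by omega⟩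
  have hN : (0 : ℝ) < N := by exact_mod_cast (by omega : 0 < N)
  rw [Nat.add_sub_cancel, show ((N + 1 : ℕ) : ℝ) - 1 = N by push_cast; ring]
  refine ⟨fun γ => dropZero (φ γ), ciSup_le fun p => ?_, fun h => ?_⟩
  · beta_reduce
    rw [map_mul, dH_eq_card_filter_ne_div]
    gcongr
    exact_mod_cast card_filter_dropZero_mul_ne_le_two _ _
  · obtain ⟨γ, hγ⟩ := exists_two_mul_card_filter_apply_eq_le φ h hφ (by simp) Fin.succ
    refine ⟨γ, ?_⟩
    have hagree := card_filter_dropZero_apply_eq_le (φ γ) (h γ)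
    have hsplit : #{x | dropZero (φ γ) x = h γ x} + #{x | dropZero (φ γ) x ≠ h γ x} = N :=
      (card_filter_add_card_filter_not _).trans (card_fin N)
    rw [Fintype.card_fin] at hγ
    have hfar : (N : ℝ) ≤ 2 * #{x | dropZero (φ γ) x ≠ h γ x} + 2 := by
      exact_mod_cast (by omega : N ≤ 2 * #{x | dropZero (φ γ) x ≠ h γ x} + 2)
    rw [dH_eq_card_filter_ne_div, ge_iff_le, le_div_iff₀ hN]
    calc (1 / 2 - 1 / (N : ℝ)) * N = N / 2 - 1 := by field_simp
      _ ≤ _ := by linarith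
end

section
/- Let Γ be a group that admits a surjective homomorphism onto the free group F₂ of rank 2. Then for every integer k ≥ 1 there exist n_k ∈ ℕ with n_k = k² and a function f_k : Γ → Sym(n_k) such that defect_∞(f_k) ≤ 2/k, but for every N ≥ n_k and every group homomorphism h : Γ → Sym(N), d_∞(h, f_k) ≥ 1 − 5/k. -/
open Finset

/-!
Write `u = of 0` and `v = of 1`. For a reduced word `w` let `d(w) ∈ ℤ/k` be its exponent sum in
`u`, and let `ℓ_w : ℤ/k → ℤ/k` count, with sign, the subwords `v²` and `v⁻²` of `w` according to
the position of the `u`-walk where they occur. Then `(x, y) ↦ (x + d(w), y + ℓ_w(x + d(w)))` is a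
permutation of `(ℤ/k)²`. Reducing `x.toWord ++ y.toWord` cancels a common segment, and only the
two letters that meet at the junction can create a new `v²`-pair (Brooks' counting argument), so
the permutations of `xy` and of `x` composed with `y` agree outside one column: the defect is at
most `k / k² = 1 / k`.

Against a homomorphism `h : Γ → Sym(N)`, put `D = N!` and lift `(u v^D)^k u^(D-k)` to `Γ` along
`π`. This element is killed by `h`, while its word is positive (hence reduced), has `u`-exponent
`D ≡ 0 mod k` (as `k ≤ N`) and puts exactly one block `v^D`, carrying `D - 1 ≡ -1` pairs, at every
position of `ℤ/k`. Hence `f` moves every point where `h` is the identity: Hamming distance `1`.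
-/

section HammingDistance

variable {n N : ℕ}

lemma dH_nonneg (σ : Equiv.Perm (Fin n)) (τ : Equiv.Perm (Fin N)) : 0 ≤ dH σ τ := by
  unfold dH
  positivity

lemma dH_le_one (σ : Equiv.Perm (Fin n)) (τ : Equiv.Perm (Fin N)) : dH σ τ ≤ 1 := by
  unfold dH
  refine div_le_one_of_le₀ ?_ (Nat.cast_nonneg _)
  exact_mod_cast (card_filter_le _ _).trans (card_range _).le

lemma dH_le_dInfty {Γ : Type*} (f : Γ → Equiv.Perm (Fin n)) (h : Γ → Equiv.Perm (Fin N))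
    (γ : Γ) : dH (f γ) (h γ) ≤ dInfty f h :=
  le_ciSup (f := fun γ => dH (f γ) (h γ)) ⟨1, Set.forall_mem_range.2 fun _ => dH_le_one _ _⟩ γ

lemma dH_eq_card_div (σ τ : Equiv.Perm (Fin n)) : dH σ τ = #{i | σ i ≠ τ i} / n := by
  have hext : ∀ i : Fin n, permExt σ i ≠ permExt τ i ↔ σ i ≠ τ i := fun i => by
    simp [permExt, Fin.val_inj]
  rw [dH, max_self, card_filter, card_filter, ← Fin.sum_univ_eq_sum_range]
  simp only [hext]

lemma dH_permCongr {α : Type*} [Fintype α] [DecidableEq α] (e : α ≃ Fin n)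
    (σ τ : Equiv.Perm α) : dH (e.permCongr σ) (e.permCongr τ) = #{a | σ a ≠ τ a} / n := by
  rw [dH_eq_card_div, card_equiv (t := {a | σ a ≠ τ a}) e.symm (fun i => by simp)]

lemma dH_one_right_eq_one (hnN : n ≤ N) (hN : 0 < N) (σ : Equiv.Perm (Fin n)) (hσ : ∀ i, σ i ≠ i) :
    dH σ (1 : Equiv.Perm (Fin N)) = 1 := by
  have hall : ∀ x ∈ range N, permExt σ x ≠ permExt (1 : Equiv.Perm (Fin N)) x := by
    intro x hx
    have hxN := mem_range.1 hx
    by_cases hxn : x < n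
    · simpa [permExt, hxn, hxN, Fin.ext_iff] using hσ ⟨x, hxn⟩
    · simp [permExt, hxn, hxN]
  rw [dH, max_eq_right hnN, filter_true_of_mem hall, card_range,
    div_self (Nat.cast_ne_zero.2 hN.ne')]

end HammingDistance

open FreeGroup

namespace FreeGroup

variable {α : Type*}

theorem isReduced_of_forall_snd {L : List (α × Bool)} (h : ∀ a ∈ L, a.2 = true) :
    IsReduced L := by
  unfold IsReduced
  refine (List.pairwise_of_forall_mem_list fun a ha b hb _ => ?_).isChain
  exact (h a ha).trans (h b hb).symm

variable [DecidableEq α]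

theorem exists_reduce_append_eq {L₁ L₂ : List (α × Bool)} (h₁ : IsReduced L₁)
    (h₂ : IsReduced L₂) :
    ∃ P S Q, L₁ = P ++ S ∧ L₂ = invRev S ++ Q ∧ reduce (L₁ ++ L₂) = P ++ Q := by
  induction L₁ using List.reverseRecOn generalizing L₂ with
  | nil => exact ⟨[], [], L₂, rfl, rfl, h₂.reduce_eq⟩
  | append_singleton M a ih =>
    cases L₂ with
    | nil => exact ⟨M ++ [a], [], [], by simp, rfl, by simpa using h₁.reduce_eq⟩
    | cons b L₂ =>
      by_cases hab : b = (a.1, !a.2)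
      · subst hab
        obtain ⟨P, S, Q, hM, hL₂, hred⟩ :=
          ih (List.isChain_append.1 h₁).1 (List.isChain_cons.1 h₂).2
        refine ⟨P, S ++ [a], Q, by simp [hM], by simp [hL₂, invRev], ?_⟩
        rw [← hred, List.append_assoc, List.singleton_append]
        exact reduce.Step.eq Red.Step.not
      · refine ⟨M ++ [a], [], b :: L₂, by simp, rfl, IsReduced.reduce_eq ?_⟩
        refine List.isChain_append.2 ⟨h₁, h₂, ?_⟩
        simp only [List.getLast?_concat, Option.mem_def, Option.some.injEq, List.head?_cons,
          forall_eq']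
        rcases a with ⟨a, _ | _⟩ <;> rcases b with ⟨b, _ | _⟩ <;> simp_all [eq_comm]

end FreeGroup

namespace LampCocycle

variable {k : ℕ}

def uStep (k : ℕ) (a : Fin 2 × Bool) : ZMod k :=
  if a.1 = 0 then (if a.2 then 1 else -1) else 0

def uDisp (k : ℕ) (L : List (Fin 2 × Bool)) : ZMod k :=
  (L.map (uStep k)).sum

def vvWeight (k : ℕ) (a b : Fin 2 × Bool) : ZMod k :=
  if a.1 = 1 ∧ b = a then (if a.2 then 1 else -1) else 0

/-- The pair of consecutive letters `a b` is recorded at the position of the `u`-walk just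
after reading `a`. -/
def vvCount (k : ℕ) : List (Fin 2 × Bool) → ZMod k → ZMod k
  | a :: b :: L, x =>
      vvWeight k a b * (if x = uStep k a then 1 else 0) + vvCount k (b :: L) (x - uStep k a)
  | _, _ => 0

def seamWeight (k : ℕ) (L M : List (Fin 2 × Bool)) : ZMod k :=
  match L.getLast?, M.head? with
  | some a, some b => vvWeight k a b
  | _, _ => 0

@[simp] lemma uDisp_nil : uDisp k [] = 0 := rfl

@[simp] lemma uDisp_cons (a : Fin 2 × Bool) (L : List (Fin 2 × Bool)) :
    uDisp k (a :: L) = uStep k a + uDisp k L :=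
  List.sum_cons

@[simp] lemma uDisp_append (L M : List (Fin 2 × Bool)) :
    uDisp k (L ++ M) = uDisp k L + uDisp k M := by
  simp [uDisp]

lemma uStep_inv (a : Fin 2 × Bool) : uStep k (a.1, !a.2) = -uStep k a := by
  rcases a with ⟨a, _ | _⟩ <;> fin_cases a <;> simp [uStep]

lemma uDisp_invRev (L : List (Fin 2 × Bool)) : uDisp k (invRev L) = -uDisp k L := by
  induction L with
  | nil => simp
  | cons a L ih =>
    rw [invRev_cons, uDisp_append, ih]
    simp [invRev, uStep_inv, add_comm]

lemma vvWeight_inv (a b : Fin 2 × Bool) :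
    vvWeight k (b.1, !b.2) (a.1, !a.2) = -vvWeight k a b := by
  rcases a with ⟨a, _ | _⟩ <;> rcases b with ⟨b, _ | _⟩ <;> fin_cases a <;> fin_cases b <;>
    simp [vvWeight]

lemma vvWeight_eq_zero_of_fst_eq_zero {a b : Fin 2 × Bool} (h : a.1 = 0 ∨ b.1 = 0) :
    vvWeight k a b = 0 := by
  rw [vvWeight, if_neg]
  rintro ⟨ha, rfl⟩
  simp_all

@[simp] lemma vvCount_nil (x : ZMod k) : vvCount k [] x = 0 := rfl

@[simp] lemma vvCount_singleton (a : Fin 2 × Bool) (x : ZMod k) : vvCount k [a] x = 0 := rfl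

lemma vvCount_cons_cons (a b : Fin 2 × Bool) (L : List (Fin 2 × Bool)) (x : ZMod k) :
    vvCount k (a :: b :: L) x =
      vvWeight k a b * (if x = uStep k a then 1 else 0) + vvCount k (b :: L) (x - uStep k a) :=
  rfl

lemma vvCount_append (L M : List (Fin 2 × Bool)) (x : ZMod k) :
    vvCount k (L ++ M) x = vvCount k L x + vvCount k M (x - uDisp k L) +
      seamWeight k L M * (if x = uDisp k L then 1 else 0) := by
  induction L generalizing x with
  | nil => simp [seamWeight]
  | cons a L ih =>
    cases L with
    | nil =>
      cases M with
      | nil => simp [seamWeight]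
      | cons b M =>
        simp only [List.cons_append, List.nil_append, vvCount_cons_cons, vvCount_singleton,
          uDisp_cons, uDisp_nil, add_zero, seamWeight, List.getLast?_singleton, List.head?_cons]
        ring
    | cons a' L =>
      have hseam : seamWeight k (a :: a' :: L) M = seamWeight k (a' :: L) M := by
        simp [seamWeight, List.getLast?_cons_cons]
      rw [List.cons_append, List.cons_append, vvCount_cons_cons, ← List.cons_append, ih, hseam]
      simp only [uDisp_cons, sub_sub, sub_eq_iff_eq_add', vvCount_cons_cons]
      ring

lemma vvCount_append_of_ne {L : List (Fin 2 × Bool)} {x : ZMod k} (hx : x ≠ uDisp k L)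
    (M : List (Fin 2 × Bool)) :
    vvCount k (L ++ M) x = vvCount k L x + vvCount k M (x - uDisp k L) := by
  simp [vvCount_append, hx]

lemma vvCount_invRev (L : List (Fin 2 × Bool)) (x : ZMod k) :
    vvCount k (invRev L) x = -vvCount k L (x + uDisp k L) := by
  induction L generalizing x with
  | nil => simp [invRev]
  | cons a L ih =>
    have hsingle : invRev [a] = [(a.1, !a.2)] := rfl
    rw [invRev_cons, vvCount_append, ih, hsingle, vvCount_singleton, uDisp_invRev]
    cases L with
    | nil => simp [invRev, seamWeight]
    | cons b L =>
      have hseam : seamWeight k (invRev (b :: L)) [(a.1, !a.2)] = -vvWeight k a b := by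
        simp [seamWeight, invRev, vvWeight_inv]
      have hpos : x + (uStep k a + uDisp k (b :: L)) = uStep k a ↔ x = -uDisp k (b :: L) := by
        constructor <;> intro h <;> linear_combination h
      have hshift : x + (uStep k a + uDisp k (b :: L)) - uStep k a = x + uDisp k (b :: L) := by
        ring
      rw [hseam, vvCount_cons_cons, uDisp_cons a (b :: L), if_congr hpos rfl rfl, hshift]
      ring

lemma uDisp_toWord_mul (x y : FreeGroup (Fin 2)) :
    uDisp k (x * y).toWord = uDisp k x.toWord + uDisp k y.toWord := by
  obtain ⟨P, S, Q, hx, hy, hxy⟩ := exists_reduce_append_eq isReduced_toWord isReduced_toWord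
    (L₁ := x.toWord) (L₂ := y.toWord)
  rw [toWord_mul, hxy, hx, hy]
  simp only [uDisp_append, uDisp_invRev]
  ring

lemma exists_vvCount_toWord_mul (x y : FreeGroup (Fin 2)) : ∃ c : ZMod k, ∀ z ≠ c,
    vvCount k (x * y).toWord z =
      vvCount k x.toWord z + vvCount k y.toWord (z - uDisp k x.toWord) := by
  obtain ⟨P, S, Q, hx, hy, hxy⟩ := exists_reduce_append_eq isReduced_toWord isReduced_toWord
    (L₁ := x.toWord) (L₂ := y.toWord)
  refine ⟨uDisp k P, fun z hz => ?_⟩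
  have hz' : z - uDisp k (P ++ S) ≠ uDisp k (invRev S) := by
    rw [uDisp_append, uDisp_invRev]
    exact fun h => hz (by linear_combination h)
  rw [toWord_mul, hxy, hx, hy, vvCount_append_of_ne hz, vvCount_append_of_ne hz,
    vvCount_append_of_ne hz', vvCount_invRev]
  simp only [uDisp_append, uDisp_invRev]
  rw [show z - (uDisp k P + uDisp k S) + uDisp k S = z - uDisp k P by ring,
    show z - (uDisp k P + uDisp k S) - -uDisp k S = z - uDisp k P by ring]
  ring

def skewPerm (k : ℕ) (w : FreeGroup (Fin 2)) : Equiv.Perm (ZMod k × ZMod k) :=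
  Equiv.prodShear (Equiv.addRight (uDisp k w.toWord))
    fun x => Equiv.addRight (vvCount k w.toWord (x + uDisp k w.toWord))

lemma skewPerm_apply (w : FreeGroup (Fin 2)) (z : ZMod k × ZMod k) :
    skewPerm k w z =
      (z.1 + uDisp k w.toWord, z.2 + vvCount k w.toWord (z.1 + uDisp k w.toWord)) :=
  rfl

lemma exists_skewPerm_mul_apply (x y : FreeGroup (Fin 2)) : ∃ c : ZMod k,
    ∀ z : ZMod k × ZMod k, z.1 ≠ c → skewPerm k (x * y) z = (skewPerm k x * skewPerm k y) z := by
  obtain ⟨c, hc⟩ := exists_vvCount_toWord_mul (k := k) x y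
  refine ⟨c - uDisp k (x * y).toWord, fun z hz => ?_⟩
  have hz' : z.1 + uDisp k (x * y).toWord ≠ c := fun h => hz (by rw [← h]; ring)
  have hend : z.1 + uDisp k (x * y).toWord = z.1 + uDisp k y.toWord + uDisp k x.toWord := by
    rw [uDisp_toWord_mul]; ring
  rw [Equiv.Perm.mul_apply, skewPerm_apply, skewPerm_apply, skewPerm_apply, hc _ hz', hend,
    add_sub_cancel_right]
  exact Prod.ext rfl (by dsimp only; ring)

lemma card_skewPerm_mul_ne_le [NeZero k] (x y : FreeGroup (Fin 2)) :
    #{z | skewPerm k (x * y) z ≠ (skewPerm k x * skewPerm k y) z} ≤ k := by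
  obtain ⟨c, hc⟩ := exists_skewPerm_mul_apply (k := k) x y
  calc _ ≤ #({c} ×ˢ univ : Finset (ZMod k × ZMod k)) := by
        refine card_le_card fun z hz => ?_
        simp only [mem_filter, mem_univ, true_and] at hz
        exact mem_product.2 ⟨mem_singleton.2 (not_imp_comm.1 (hc z) hz), mem_univ _⟩
    _ = k := by simp

noncomputable def gridEquiv (k : ℕ) [NeZero k] : ZMod k × ZMod k ≃ Fin (k ^ 2) :=
  Fintype.equivFinOfCardEq (by rw [Fintype.card_prod, ZMod.card, sq])

noncomputable def almostHom (k : ℕ) [NeZero k] {Γ : Type*} [Group Γ]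
    (π : Γ →* FreeGroup (Fin 2)) : Γ → Equiv.Perm (Fin (k ^ 2)) :=
  fun γ => (gridEquiv k).permCongr (skewPerm k (π γ))

lemma defectInfty_almostHom_le [NeZero k] {Γ : Type*} [Group Γ] (π : Γ →* FreeGroup (Fin 2)) :
    defectInfty (almostHom k π) ≤ 1 / k := by
  have hk : (0 : ℝ) < k := Nat.cast_pos.2 (NeZero.pos k)
  refine ciSup_le fun p => ?_
  rw [almostHom, almostHom, almostHom, π.map_mul, ← Equiv.permCongr_mul, dH_permCongr]
  calc _ ≤ (k : ℝ) / (k ^ 2 : ℕ) := by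
        gcongr
        exact_mod_cast card_skewPerm_mul_ne_le _ _
    _ = 1 / k := by push_cast; field_simp

lemma vvCount_eq_zero_of_forall_fst {L : List (Fin 2 × Bool)} (h : ∀ a ∈ L, a.1 = 0)
    (x : ZMod k) : vvCount k L x = 0 := by
  induction L generalizing x with
  | nil => rfl
  | cons a L ih =>
    cases L with
    | nil => rfl
    | cons b L =>
      rw [vvCount_cons_cons, vvWeight_eq_zero_of_fst_eq_zero (.inl (h a (by simp))),
        ih (fun a ha => h a (List.mem_cons_of_mem _ ha)), zero_mul, add_zero]

lemma vvCount_append_of_head_fst_eq_zero (L : List (Fin 2 × Bool)) {M : List (Fin 2 × Bool)}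
    (hM : ∀ b ∈ M.head?, b.1 = 0) (x : ZMod k) :
    vvCount k (L ++ M) x = vvCount k L x + vvCount k M (x - uDisp k L) := by
  have hseam : seamWeight k L M = 0 := by
    unfold seamWeight
    split
    · exact vvWeight_eq_zero_of_fst_eq_zero (.inr (hM _ ‹_›))
    · rfl
  rw [vvCount_append, hseam, zero_mul, add_zero]

lemma vvCount_replicate_succ (c : ℕ) (x : ZMod k) :
    vvCount k (List.replicate (c + 1) (1, true)) x = c * (if x = 0 then 1 else 0) := by
  induction c with
  | zero => simp
  | succ c ih =>
    have hstep : uStep k ((1 : Fin 2), true) = 0 := by simp [uStep]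
    have hweight : vvWeight k ((1 : Fin 2), true) (1, true) = 1 := by simp [vvWeight]
    rw [List.replicate_succ, List.replicate_succ, vvCount_cons_cons, ← List.replicate_succ,
      hstep, hweight, sub_zero, ih]
    push_cast
    ring

def witnessWord (c n m : ℕ) : List (Fin 2 × Bool) :=
  (List.replicate n ((0, true) :: List.replicate (c + 1) (1, true))).flatten ++
    List.replicate m (0, true)

lemma uDisp_witnessWord (c n m : ℕ) : uDisp k (witnessWord c n m) = n + m := by
  simp [witnessWord, uDisp, uStep, List.sum_flatten, List.map_flatten]

lemma vvCount_flatten_replicate (c n : ℕ) (x : ZMod k) :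
    vvCount k (List.replicate n ((0, true) :: List.replicate (c + 1) (1, true))).flatten x =
      ∑ j ∈ range n, if x = j + 1 then (c : ZMod k) else 0 := by
  induction n generalizing x with
  | zero => simp
  | succ n ih =>
    have hhead : ∀ b ∈ (List.replicate n (((0 : Fin 2), true) ::
        List.replicate (c + 1) (1, true))).flatten.head?, b.1 = 0 := by
      cases n <;> simp
    have hblock : vvCount k ((0, true) :: List.replicate (c + 1) (1, true)) x =
        c * (if x - 1 = 0 then 1 else 0) := by
      rw [List.replicate_succ, vvCount_cons_cons, vvWeight_eq_zero_of_fst_eq_zero (.inl rfl),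
        ← List.replicate_succ, vvCount_replicate_succ]
      simp [uStep]
    rw [List.replicate_succ, List.flatten_cons, vvCount_append_of_head_fst_eq_zero _ hhead, hblock, ih,
      sum_range_succ']
    simp [uDisp, uStep, sub_eq_iff_eq_add, add_comm]

lemma sum_range_ite_natCast_add_one [NeZero k] {M : Type*} [AddCommMonoid M] (x : ZMod k)
    (a : M) : ∑ j ∈ range k, (if x = j + 1 then a else 0) = a := by
  have hiff : ∀ j ∈ range k, x = j + 1 ↔ (x - 1).val = j := fun j hj => by
    rw [← sub_eq_iff_eq_add]
    constructor
    · rintro h; rw [h, ZMod.val_cast_of_lt (mem_range.1 hj)]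
    · rintro rfl; rw [ZMod.natCast_zmod_val]
  rw [sum_congr rfl fun j hj => if_congr (hiff j hj) rfl rfl, sum_ite_eq,
    if_pos (mem_range.2 (ZMod.val_lt _))]

lemma vvCount_witnessWord [NeZero k] (c m : ℕ) (x : ZMod k) :
    vvCount k (witnessWord c k m) x = c := by
  rw [witnessWord, vvCount_append_of_head_fst_eq_zero _ (by cases m <;> simp [List.replicate_succ]),
    vvCount_flatten_replicate, sum_range_ite_natCast_add_one,
    vvCount_eq_zero_of_forall_fst (by simp), add_zero]

lemma toWord_mk_witnessWord (c n m : ℕ) :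
    (mk (witnessWord c n m)).toWord = witnessWord c n m :=
  toWord_mk.trans (isReduced_of_forall_snd (by simp [witnessWord])).reduce_eq

lemma mk_witnessWord (c n m : ℕ) :
    mk (witnessWord c n m) = (of 0 * of 1 ^ (c + 1)) ^ n * of 0 ^ m := by
  simp only [FreeGroup.of, pow_mk, mul_mk, witnessWord]
  simp

lemma skewPerm_mk_witnessWord_ne [NeZero k] {c : ℕ} (hc : (c : ZMod k) ≠ 0) (m : ℕ)
    (z : ZMod k × ZMod k) : skewPerm k (mk (witnessWord c k m)) z ≠ z := by
  rw [skewPerm_apply, toWord_mk_witnessWord, vvCount_witnessWord]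
  intro h
  exact hc (add_eq_left.1 (congrArg Prod.snd h))

theorem exists_dH_almostHom_eq_one [NeZero k] (hk : 2 ≤ k) {Γ : Type*} [Group Γ]
    {π : Γ →* FreeGroup (Fin 2)} (hπ : Function.Surjective π) {N : ℕ} (hN : k ^ 2 ≤ N)
    (h : Γ →* Equiv.Perm (Fin N)) : ∃ γ, dH (almostHom k π γ) (h γ) = 1 := by
  obtain ⟨u, hu⟩ := hπ (of 0)
  obtain ⟨v, hv⟩ := hπ (of 1)
  set D := N.factorial
  have hkN : k ≤ N := (Nat.le_self_pow two_ne_zero k).trans hN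
  have hkD : k ≤ D := hkN.trans N.self_le_factorial
  have hpow : ∀ σ : Equiv.Perm (Fin N), σ ^ D = 1 := fun σ => by
    simpa [D, Fintype.card_perm] using pow_card_eq_one (x := σ)
  refine ⟨(u * v ^ D) ^ k * u ^ (D - k), ?_⟩
  have hword : π ((u * v ^ D) ^ k * u ^ (D - k)) = mk (witnessWord (D - 1) k (D - k)) := by
    rw [mk_witnessWord, Nat.sub_add_cancel N.factorial_pos]
    simp [hu, hv, D]
  have hkilled : h ((u * v ^ D) ^ k * u ^ (D - k)) = 1 := by
    simp [hpow, ← pow_add, Nat.add_sub_cancel' hkD]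
  have hc : ((D - 1 : ℕ) : ZMod k) ≠ 0 := by
    have : Fact (1 < k) := ⟨hk⟩
    rw [Nat.cast_sub N.factorial_pos, (ZMod.natCast_eq_zero_iff _ _).2 (Nat.dvd_factorial
      (NeZero.pos k) hkN)]
    simp
  rw [hkilled]
  refine dH_one_right_eq_one hN ((NeZero.pos k).trans_le hkN) _ fun i hi => ?_
  rw [almostHom, Equiv.permCongr_apply, ← Equiv.eq_symm_apply, hword] at hi
  exact skewPerm_mk_witnessWord_ne hc _ _ hi

end LampCocycle

/-- a group surjecting onto the free group `F₂` is not uniformly flexibly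
stable. -/
theorem statement3 {Γ : Type*} [Group Γ] (π : Γ →* FreeGroup (Fin 2))
    (hπ : Function.Surjective π) :
    ∀ k : ℕ, 1 ≤ k →
      ∃ f : Γ → Equiv.Perm (Fin (k ^ 2)),
        defectInfty f ≤ 2 / (k : ℝ) ∧
        ∀ N : ℕ, k ^ 2 ≤ N → ∀ h : Γ →* Equiv.Perm (Fin N),
          dInfty f (fun γ => h γ) ≥ 1 - 5 / (k : ℝ) := by
  intro k hk
  have : NeZero k := ⟨by omega⟩
  refine ⟨LampCocycle.almostHom k π, ?_, fun N hN h => ?_⟩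
  · refine (LampCocycle.defectInfty_almostHom_le π).trans ?_
    gcongr
    norm_num
  obtain rfl | hk := hk.eq_or_lt
  · calc (1 : ℝ) - 5 / ((1 : ℕ) : ℝ) ≤ 0 := by norm_num
      _ ≤ _ := Real.iSup_nonneg fun γ => dH_nonneg _ _
  · obtain ⟨γ, hγ⟩ := LampCocycle.exists_dH_almostHom_eq_one hk hπ hN h
    calc 1 - 5 / (k : ℝ) ≤ 1 := sub_le_self _ (by positivity)
      _ = _ := hγ.symm
      _ ≤ _ := dH_le_dInfty _ _ γ
end

section
/- Let G be a group equipped with a bi-invariant metric d, and suppose there is a real number M₂ ≥ 0 such that for every g ∈ G there exists h ∈ G with h² = 1 and d(g,h) ≤ M₂·d(g²,1). Set C = 2·max{1, M₂}. Let Γ be a group, f : Γ → G a function, and δ ≥ 0 such that d(f(γ₁γ₂), f(γ₁)f(γ₂)) ≤ δ for all γ₁, γ₂ ∈ Γ. Then there exists a symmetric function f' : Γ → G such that d(f(γ), f'(γ)) ≤ C·δ for every γ ∈ Γ, and d(f'(γ₁γ₂), f'(γ₁)f'(γ₂)) ≤ (3C + 1)·δ for all γ₁, γ₂ ∈ Γ.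 -/
/-!
Away from `1` and from the involutions of `Γ`, the elements of `Γ` fall into pairs `{γ, γ⁻¹}`;
keep `f` on one element of each pair and put `(f γ)⁻¹` on the other, send `1` to `1`, and send
an involution `γ` to an exact square root of `1` close to `f γ`. Bi-invariance makes the defect
of `f` control all three changes: `f 1` is `δ`-close to `1`, `f γ⁻¹` is `2δ`-close to `(f γ)⁻¹`,
and `f γ ^ 2` is `2δ`-close to `1` when `γ² = 1`. A map uniformly `ε`-close to `f` has defect at
most `δ + 3ε`.
-/

open Finset

noncomputable def invPairRep {Γ : Type*} [Inv Γ] (γ : Γ) : Γ :=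
  Classical.choose (⟨γ, Or.inl rfl⟩ : ∃ x, x = γ ∨ x = γ⁻¹)

theorem invPairRep_eq_or {Γ : Type*} [Inv Γ] (γ : Γ) :
    invPairRep γ = γ ∨ invPairRep γ = γ⁻¹ :=
  Classical.choose_spec (⟨γ, Or.inl rfl⟩ : ∃ x, x = γ ∨ x = γ⁻¹)

theorem invPairRep_inv {Γ : Type*} [InvolutiveInv Γ] (γ : Γ) :
    invPairRep γ⁻¹ = invPairRep γ := by
  unfold invPairRep
  congr 1
  ext x
  rw [inv_inv, or_comm]

section Symmetrization

variable {Γ G : Type*} [Group Γ] [Group G]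

open Classical in
noncomputable def symmetrization (f : Γ → G) (root : G → G) (γ : Γ) : G :=
  if γ = 1 then 1
  else if γ⁻¹ = γ then root (f γ)
  else if invPairRep γ = γ then f γ
  else (f γ⁻¹)⁻¹

theorem isSymmetricMap_symmetrization (f : Γ → G) {root : G → G}
    (hroot : ∀ g, root g ^ 2 = 1) : IsSymmetricMap (symmetrization f root) := by
  refine ⟨if_pos rfl, fun γ => ?_⟩
  by_cases h1 : γ = 1
  · simp [symmetrization, h1]
  have h1' : γ⁻¹ ≠ 1 := inv_ne_one.mpr h1
  by_cases h2 : γ⁻¹ = γ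
  · simp only [symmetrization, if_neg h1, if_neg h1', h2, if_true]
    rw [eq_inv_iff_mul_eq_one, ← sq, hroot]
  have h2' : γ⁻¹⁻¹ ≠ γ⁻¹ := by rw [inv_inv]; exact Ne.symm h2
  rcases invPairRep_eq_or γ with hr | hr
  · have hr' : invPairRep γ⁻¹ ≠ γ⁻¹ := by rw [invPairRep_inv, hr]; exact Ne.symm h2
    simp only [symmetrization, if_neg h1, if_neg h1', if_neg h2, if_neg h2', if_pos hr, if_neg hr',
      inv_inv]
  · have hr' : invPairRep γ⁻¹ = γ⁻¹ := by rw [invPairRep_inv, hr]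
    have hr'' : invPairRep γ ≠ γ := by rw [hr]; exact h2
    simp only [symmetrization, if_neg h1, if_neg h1', if_neg h2, if_neg h2', if_pos hr', if_neg hr'',
      inv_inv]

end Symmetrization

section BiInvariant

variable {G Γ : Type*} [Group G] [PseudoMetricSpace G] [IsIsometricSMul G G] [Group Γ]
  {f : Γ → G} {δ : ℝ}

theorem dist_map_one_le (hf : ∀ a b, dist (f (a * b)) (f a * f b) ≤ δ) :
    dist (f 1) 1 ≤ δ :=
  calc dist (f 1) 1 = dist (f 1 * f 1) (f 1 * 1) := by rw [dist_mul_left]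
    _ = dist (f (1 * 1)) (f 1 * f 1) := by rw [one_mul, mul_one, dist_comm]
    _ ≤ δ := hf 1 1

theorem dist_map_mul_map_one_le_of_mul_eq_one (hf : ∀ a b, dist (f (a * b)) (f a * f b) ≤ δ) {a b : Γ}
    (hab : a * b = 1) : dist (f a * f b) 1 ≤ 2 * δ :=
  calc dist (f a * f b) 1 ≤ dist (f a * f b) (f (a * b)) + dist (f (a * b)) 1 :=
        dist_triangle _ _ _
    _ ≤ δ + δ := by
        gcongr
        · rw [dist_comm]; exact hf a b
        · rw [hab]; exact dist_map_one_le hf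
    _ = 2 * δ := by ring

variable [IsIsometricSMul Gᵐᵒᵖ G]

theorem dist_mul_mul_le_of_isIsometricSMul (a b c e : G) :
    dist (a * b) (c * e) ≤ dist a c + dist b e :=
  calc dist (a * b) (c * e) ≤ dist (a * b) (c * b) + dist (c * b) (c * e) := dist_triangle _ _ _
    _ = dist a c + dist b e := by rw [dist_mul_right, dist_mul_left]

theorem dist_map_inv_map_inv_le (hf : ∀ a b, dist (f (a * b)) (f a * f b) ≤ δ) (γ : Γ) :
    dist (f γ) (f γ⁻¹)⁻¹ ≤ 2 * δ := by
  rw [← dist_mul_right _ _ (f γ⁻¹), inv_mul_cancel]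
  exact dist_map_mul_map_one_le_of_mul_eq_one hf (mul_inv_cancel γ)

theorem dist_map_mul_le_of_dist_le {f' : Γ → G} {ε : ℝ}
    (hf : ∀ a b, dist (f (a * b)) (f a * f b) ≤ δ) (hff' : ∀ γ, dist (f γ) (f' γ) ≤ ε)
    (a b : Γ) : dist (f' (a * b)) (f' a * f' b) ≤ δ + 3 * ε :=
  calc dist (f' (a * b)) (f' a * f' b)
      ≤ dist (f' (a * b)) (f (a * b)) + dist (f (a * b)) (f a * f b)
          + dist (f a * f b) (f' a * f' b) := dist_triangle4 _ _ _ _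
    _ ≤ ε + δ + (ε + ε) := by
        gcongr
        · rw [dist_comm]; exact hff' _
        · exact hf a b
        · exact (dist_mul_mul_le_of_isIsometricSMul _ _ _ _).trans (add_le_add (hff' a) (hff' b))
    _ = δ + 3 * ε := by ring

theorem dist_symmetrization_le {root : G → G} {M : ℝ}
    (hroot : ∀ g, dist g (root g) ≤ M * dist (g ^ 2) 1)
    (hf : ∀ a b, dist (f (a * b)) (f a * f b) ≤ δ) (γ : Γ) :
    dist (f γ) (symmetrization f root γ) ≤ 2 * max 1 M * δ := by
  have hδ : 0 ≤ δ := dist_nonneg.trans (hf 1 1)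
  have hM : 1 ≤ max 1 M := le_max_left 1 M
  unfold symmetrization
  split_ifs with h1 h2
  · calc dist (f γ) 1 ≤ δ := h1 ▸ dist_map_one_le hf
      _ ≤ 2 * max 1 M * δ := by nlinarith
  · have hsq : dist (f γ ^ 2) 1 ≤ 2 * δ := by
      rw [sq]
      exact dist_map_mul_map_one_le_of_mul_eq_one hf (mul_eq_one_iff_eq_inv.mpr h2.symm)
    calc dist (f γ) (root (f γ)) ≤ M * dist (f γ ^ 2) 1 := hroot _
      _ ≤ max 1 M * dist (f γ ^ 2) 1 := by gcongr; exact le_max_right 1 M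
      _ ≤ max 1 M * (2 * δ) := by gcongr
      _ = 2 * max 1 M * δ := by ring
  · rw [dist_self]; positivity
  · calc dist (f γ) (f γ⁻¹)⁻¹ ≤ 2 * δ := dist_map_inv_map_inv_le hf γ
      _ ≤ 2 * max 1 M * δ := by nlinarith

end BiInvariant

theorem statement8_general {G : Type*} [Group G] (d : G → G → ℝ)
    (hd_symm : ∀ g h : G, d g h = d h g)
    (hd_tri : ∀ g h k : G, d g k ≤ d g h + d h k)
    (hd_eq : ∀ g h : G, d g h = 0 ↔ g = h)
    (hd_bi : ∀ a b g h : G, d (a * g * b) (a * h * b) = d g h)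
    (M₂ : ℝ)
    (hroot : ∀ g : G, ∃ h : G, h ^ 2 = 1 ∧ d g h ≤ M₂ * d (g ^ 2) 1)
    {Γ : Type*} [Group Γ] (f : Γ → G) (δ : ℝ)
    (hdef : ∀ γ₁ γ₂ : Γ, d (f (γ₁ * γ₂)) (f γ₁ * f γ₂) ≤ δ) :
    ∃ f' : Γ → G, IsSymmetricMap f' ∧
      (∀ γ : Γ, d (f γ) (f' γ) ≤ (2 * max 1 M₂) * δ) ∧
      (∀ γ₁ γ₂ : Γ, d (f' (γ₁ * γ₂)) (f' γ₁ * f' γ₂) ≤ (3 * (2 * max 1 M₂) + 1) * δ) := by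
  let _ : PseudoMetricSpace G :=
    { dist := d
      dist_self := fun g => (hd_eq g g).2 rfl
      dist_comm := hd_symm
      dist_triangle := hd_tri }
  have : IsIsometricSMul G G := ⟨fun a => Isometry.of_dist_eq fun g h => by
    have hg := hd_bi a 1 g h
    rwa [mul_one, mul_one] at hg⟩
  have : IsIsometricSMul Gᵐᵒᵖ G := ⟨fun b => Isometry.of_dist_eq fun g h => by
    have hg := hd_bi 1 b.unop g h
    rwa [one_mul, one_mul] at hg⟩
  choose root hroot_sq hroot_dist using hroot
  have hclose := dist_symmetrization_le hroot_dist hdef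
  refine ⟨symmetrization f root, isSymmetricMap_symmetrization f hroot_sq, hclose,
    fun γ₁ γ₂ => (dist_map_mul_le_of_dist_le hdef hclose γ₁ γ₂).trans_eq (by ring)⟩

/-- symmetrization in a group with a bi-invariant metric in which approximate
square roots of the identity are close to exact ones. -/
theorem statement8 {G : Type*} [Group G] (d : G → G → ℝ)
    (hd_symm : ∀ g h : G, d g h = d h g)
    (hd_tri : ∀ g h k : G, d g k ≤ d g h + d h k)
    (hd_eq : ∀ g h : G, d g h = 0 ↔ g = h)
    (hd_bi : ∀ a b g h : G, d (a * g * b) (a * h * b) = d g h)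
    (M₂ : ℝ) (hM₂ : 0 ≤ M₂)
    (hroot : ∀ g : G, ∃ h : G, h ^ 2 = 1 ∧ d g h ≤ M₂ * d (g ^ 2) 1)
    {Γ : Type*} [Group Γ] (f : Γ → G) (δ : ℝ) (hδ : 0 ≤ δ)
    (hdef : ∀ γ₁ γ₂ : Γ, d (f (γ₁ * γ₂)) (f γ₁ * f γ₂) ≤ δ) :
    ∃ f' : Γ → G, IsSymmetricMap f' ∧
      (∀ γ : Γ, d (f γ) (f' γ) ≤ (2 * max 1 M₂) * δ) ∧
      (∀ γ₁ γ₂ : Γ, d (f' (γ₁ * γ₂)) (f' γ₁ * f' γ₂) ≤ (3 * (2 * max 1 M₂) + 1) * δ) :=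
  statement8_general d hd_symm hd_tri hd_eq hd_bi M₂ hroot f δ hdef
end

section
/- Let n ∈ ℕ and σ ∈ Sym(n). Then there exists τ ∈ Sym(n) such that τ² = id and d^H(σ, τ) = d^H(σ², id). -/
open Finset

/-!
Let `τ` agree with `σ` on the points fixed by `σ²` and be the identity elsewhere. The
points fixed by `σ²` form a `σ`-invariant set on which `σ` is an involution, so `τ² = 1`.
At a point `x` with `σ² x = x` both `σ, τ` and `σ², 1` agree; at any other point
`σ x ≠ x = τ x`. Hence `σ` and `τ` differ exactly where `σ²` and `1` do.
-/

namespace Equiv.Perm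

variable {α : Type*} [DecidableEq α]

def involutionPartFun (σ : Perm α) (x : α) : α :=
  if σ (σ x) = x then σ x else x

theorem involutive_involutionPartFun (σ : Perm α) : Function.Involutive (involutionPartFun σ) := by
  intro x
  by_cases h : σ (σ x) = x
  · have h' : σ (σ (σ x)) = σ x := congrArg σ h
    have hx : involutionPartFun σ x = σ x := if_pos h
    rw [hx, involutionPartFun, if_pos h', h]
  · simp only [involutionPartFun, if_neg h]

def involutionPart (σ : Perm α) : Perm α :=
  (involutive_involutionPartFun σ).toPerm

theorem involutionPart_apply (σ : Perm α) (x : α) :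
    involutionPart σ x = if σ (σ x) = x then σ x else x :=
  rfl

theorem involutionPart_sq (σ : Perm α) : involutionPart σ ^ 2 = 1 := by
  ext x
  exact involutive_involutionPartFun σ x

theorem apply_eq_involutionPart_apply_iff (σ : Perm α) (x : α) :
    σ x = involutionPart σ x ↔ (σ ^ 2) x = (1 : Perm α) x := by
  rw [involutionPart_apply, sq, mul_apply, one_apply]
  by_cases h : σ (σ x) = x
  · rw [if_pos h]
    exact iff_of_true rfl h
  · rw [if_neg h]
    exact iff_of_false (fun hx => h (by rw [hx, hx])) h

end Equiv.Perm

theorem dH_congr {n : ℕ} {σ τ σ' τ' : Equiv.Perm (Fin n)}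
    (h : ∀ x, σ x = τ x ↔ σ' x = τ' x) : dH σ τ = dH σ' τ' := by
  unfold dH
  congr 3
  refine filter_congr fun x hx => ?_
  have hx : x < n := by simpa using hx
  simp only [permExt, dif_pos hx, ne_eq, Option.some_inj, Fin.val_inj, h]

/-- every permutation is as close to some involution as its square is to
the identity. -/
theorem statement10 (n : ℕ) (σ : Equiv.Perm (Fin n)) :
    ∃ τ : Equiv.Perm (Fin n), τ ^ 2 = 1 ∧ dH σ τ = dH (σ ^ 2) (1 : Equiv.Perm (Fin n)) :=
  ⟨σ.involutionPart, σ.involutionPart_sq,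
    dH_congr (σ.apply_eq_involutionPart_apply_iff ·)⟩
end

section
/- Let Γ be a group equipped with a left-invariant finitely-additive probability measure m, and let f : Γ → Sym(n) be a symmetric function. Suppose ε₁, ε₂ > 0, x, y, z ∈ [n] and γ₁, γ₂ ∈ Γ satisfy w(x →γ₁→ y) > 1 − ε₁ and w(y →γ₂→ z) > 1 − ε₂. Then w(x →γ₂γ₁→ z) > 1 − ε₁ − ε₂. -/
open Finset

/-! If `t` supports `x →γ₁→ y`, then `f (t⁻¹ γ₁) x = (f t)⁻¹ y = f t⁻¹ y` by symmetry of `f`, so at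
the translated point `γ₂ t` the conditions for `x →γ₂γ₁→ z` and for `y →γ₂→ z` coincide. Hence
`γ₂ T(x →γ₁→ y) ∩ T(y →γ₂→ z) ⊆ T(x →γ₂γ₁→ z)`, and left invariance together with the union bound
`m (A ∩ B) ≥ m A + m B - 1` gives the estimate. -/

def supporters {Γ α : Type*} [Group Γ] (f : Γ → Equiv.Perm α) (x : α) (γ : Γ) (y : α) : Set Γ :=
  { t : Γ | f t (f (t⁻¹ * γ) x) = y }

theorem weight_eq_supporters {Γ : Type*} [Group Γ] {n : ℕ} (m : Set Γ → ℝ)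
    (f : Γ → Equiv.Perm (Fin n)) (x : Fin n) (γ : Γ) (y : Fin n) :
    weight m f x γ y = m (supporters f x γ y) :=
  rfl

theorem image_mul_left_supporters_inter_subset {Γ α : Type*} [Group Γ] {f : Γ → Equiv.Perm α}
    (hinv : ∀ γ, f γ⁻¹ = (f γ)⁻¹) (x y z : α) (γ₁ γ₂ : Γ) :
    (γ₂ * ·) '' supporters f x γ₁ y ∩ supporters f y γ₂ z ⊆ supporters f x (γ₂ * γ₁) z := by
  rintro _ ⟨⟨t, ht₁ : f t (f (t⁻¹ * γ₁) x) = y, rfl⟩, ht₂ : f (γ₂ * t) (f ((γ₂ * t)⁻¹ * γ₂) y) = z⟩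
  have hstep : f (t⁻¹ * γ₁) x = f t⁻¹ y := by
    rw [hinv, Equiv.Perm.eq_inv_iff_eq, ht₁]
  rw [show (γ₂ * t)⁻¹ * γ₂ = t⁻¹ by group] at ht₂
  show f (γ₂ * t) (f ((γ₂ * t)⁻¹ * (γ₂ * γ₁)) x) = z
  rwa [show (γ₂ * t)⁻¹ * (γ₂ * γ₁) = t⁻¹ * γ₁ by group, hstep]

namespace IsFinAddProb

variable {Γ : Type*} {m : Set Γ → ℝ}

theorem mono (hm : IsFinAddProb m) {S U : Set Γ} (hSU : S ⊆ U) : m S ≤ m U := by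
  have hsplit : m U = m S + m (U \ S) := by
    rw [← hm.2.2 _ _ Set.disjoint_sdiff_right, Set.union_sdiff_cancel hSU]
  linarith [(hm.1 (U \ S)).1]

theorem add_sub_one_le_inter (hm : IsFinAddProb m) (S U : Set Γ) :
    m S + m U - 1 ≤ m (S ∩ U) := by
  have hS : m S = m (S ∩ U) + m (S \ U) := by
    rw [← hm.2.2 _ _ (Set.disjoint_sdiff_inter.symm), Set.inter_union_sdiff]
  have hunion : m (S ∪ U) = m (S \ U) + m U := by
    rw [← hm.2.2 _ _ Set.disjoint_sdiff_left, Set.sdiff_union_self]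
  linarith [(hm.1 (S ∪ U)).2]

end IsFinAddProb

theorem statement14_general {Γ : Type*} [Group Γ] (m : Set Γ → ℝ)
    (hm : IsFinAddProb m) (hml : LeftInvariant m)
    {n : ℕ} (f : Γ → Equiv.Perm (Fin n)) (hf : IsSymmetricMap f)
    (ε₁ ε₂ : ℝ)
    (x y z : Fin n) (γ₁ γ₂ : Γ)
    (h₁ : 1 - ε₁ < weight m f x γ₁ y)
    (h₂ : 1 - ε₂ < weight m f y γ₂ z) :
    1 - ε₁ - ε₂ < weight m f x (γ₂ * γ₁) z := by
  rw [weight_eq_supporters] at h₁ h₂ ⊢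
  calc 1 - ε₁ - ε₂
      < m ((γ₂ * ·) '' supporters f x γ₁ y) + m (supporters f y γ₂ z) - 1 := by
        rw [hml]; linarith
    _ ≤ m ((γ₂ * ·) '' supporters f x γ₁ y ∩ supporters f y γ₂ z) :=
        hm.add_sub_one_le_inter _ _
    _ ≤ m (supporters f x (γ₂ * γ₁) z) :=
        hm.mono (image_mul_left_supporters_inter_subset hf.2 x y z γ₁ γ₂)

/-- composition of high-weight edges gives a high-weight edge. -/
theorem statement14 {Γ : Type*} [Group Γ] (m : Set Γ → ℝ)
    (hm : IsFinAddProb m) (hml : LeftInvariant m)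
    {n : ℕ} (f : Γ → Equiv.Perm (Fin n)) (hf : IsSymmetricMap f)
    (ε₁ ε₂ : ℝ) (hε₁ : 0 < ε₁) (hε₂ : 0 < ε₂)
    (x y z : Fin n) (γ₁ γ₂ : Γ)
    (h₁ : 1 - ε₁ < weight m f x γ₁ y)
    (h₂ : 1 - ε₂ < weight m f y γ₂ z) :
    1 - ε₁ - ε₂ < weight m f x (γ₂ * γ₁) z :=
  statement14_general m hm hml f hf ε₁ ε₂ x y z γ₁ γ₂ h₁ h₂
end

section
/- Let Γ be a group, let ℋ be a finite-dimensional complex Hilbert space, let ρ : Γ → U(ℋ) be a unitary representation, let ε > 0 and v ∈ ℋ. If ‖ρ(γ)v − v‖ ≤ ε‖v‖ for every γ ∈ Γ, then there exists u ∈ ℋ such that ρ(γ)u = u for every γ ∈ Γ and ‖u − v‖ ≤ (ε/√2)·‖v‖. -/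
/-!
Let `u` be the orthogonal projection of `v` onto the space of invariant vectors and `w = v - u`,
so that `‖ρ γ w - w‖ = ‖ρ γ v - v‖` and the whole orbit of `w` is orthogonal to the invariant
vectors. The closed convex hull of that orbit is invariant, so its unique point of minimal norm
is an invariant vector orthogonal to all invariant vectors, i.e. `0`. Since
`‖ρ γ w - w‖² = 2‖w‖² - 2⟪ρ γ w, w⟫`, the orbit lies in the closed half-space
`⟪x, w⟫ ≥ ‖w‖² - ε²‖v‖²/2`, which therefore contains `0`: `2‖w‖² ≤ ε²‖v‖²`.
-/

open Set Submodule

section MinimalNorm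

variable {F : Type*} [NormedAddCommGroup F] [InnerProductSpace ℝ F]

theorem mapsTo_closedConvexHull {S : Set F} {T : F →L[ℝ] F} (hS : MapsTo T S S) :
    MapsTo T (closedConvexHull ℝ S) (closedConvexHull ℝ S) :=
  closedConvexHull_min (t := T ⁻¹' closedConvexHull ℝ S)
    (fun _ hx ↦ subset_closedConvexHull (hS hx))
    (convex_closedConvexHull.linear_preimage T.toLinearMap)
    (isClosed_closedConvexHull.preimage T.continuous)

theorem eq_of_norm_le_of_norm_eq_iInf {C : Set F} (hC : Convex ℝ C) {c x : F} (hc : c ∈ C)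
    (hmin : ‖c‖ = ⨅ y : C, ‖(y : F)‖) (hx : x ∈ C) (hxc : ‖x‖ ≤ ‖c‖) : x = c := by
  have hmin' : ‖0 - c‖ = ⨅ y : C, ‖0 - (y : F)‖ := by simpa using hmin
  have hcx : ‖c‖ ^ 2 ≤ inner ℝ c x := by
    have := (norm_eq_iInf_iff_real_inner_le_zero hC hc).mp hmin' x hx
    rw [zero_sub, inner_neg_left, inner_sub_right, real_inner_self_eq_norm_sq] at this
    linarith
  have : ‖x - c‖ ^ 2 ≤ 0 := by
    rw [norm_sub_sq_real, real_inner_comm]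
    nlinarith [norm_nonneg x, norm_nonneg c]
  rw [← sub_eq_zero, ← norm_eq_zero]
  exact pow_eq_zero_iff two_ne_zero |>.mp (le_antisymm this (sq_nonneg _))

end MinimalNorm

section FixedVectors

variable {Γ F : Type*} [Monoid Γ] [NormedAddCommGroup F] [InnerProductSpace ℝ F]

def fixedSubspace (ρ : Γ →* (F ≃ₗᵢ[ℝ] F)) : Submodule ℝ F where
  carrier := {x | ∀ γ, ρ γ x = x}
  add_mem' hx hy γ := by rw [map_add, hx γ, hy γ]
  zero_mem' γ := map_zero _
  smul_mem' c x hx γ := by rw [map_smul, hx γ]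

variable (ρ : Γ →* (F ≃ₗᵢ[ℝ] F))

theorem mem_fixedSubspace {x : F} : x ∈ fixedSubspace ρ ↔ ∀ γ, ρ γ x = x := Iff.rfl

theorem isClosed_fixedSubspace : IsClosed (fixedSubspace ρ : Set F) := by
  have : (fixedSubspace ρ : Set F) = ⋂ γ, {x | ρ γ x = x} := by ext; simp [mem_fixedSubspace]
  rw [this]
  exact isClosed_iInter fun γ ↦ isClosed_eq (ρ γ).continuous continuous_id

theorem apply_mem_orthogonal_fixedSubspace {w : F} (hw : w ∈ (fixedSubspace ρ)ᗮ) (γ : Γ) :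
    ρ γ w ∈ (fixedSubspace ρ)ᗮ := fun k hk ↦ by
  rw [← hk γ, LinearIsometryEquiv.inner_map_map]
  exact hw k hk

theorem zero_mem_closedConvexHull_orbit [CompleteSpace F] {w : F}
    (hw : w ∈ (fixedSubspace ρ)ᗮ) : (0 : F) ∈ closedConvexHull ℝ (range fun γ ↦ ρ γ w) := by
  set C := closedConvexHull ℝ (range fun γ ↦ ρ γ w)
  have hC : Convex ℝ C := convex_closedConvexHull
  obtain ⟨c, hcC, hcmin⟩ := exists_norm_eq_iInf_of_complete_convex
    ⟨ρ 1 w, subset_closedConvexHull (mem_range_self 1)⟩ isClosed_closedConvexHull.isComplete hC 0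
  simp only [zero_sub, norm_neg] at hcmin
  have hc_fixed : c ∈ fixedSubspace ρ := fun γ ↦ by
    have hmaps : MapsTo (ρ γ) C C := mapsTo_closedConvexHull (T := (ρ γ : F →L[ℝ] F))
      (by rintro _ ⟨γ', rfl⟩; exact ⟨γ * γ', by simp [map_mul]⟩)
    exact eq_of_norm_le_of_norm_eq_iInf hC hcC hcmin (hmaps hcC) ((ρ γ).norm_map c).le
  have hc_orth : c ∈ (fixedSubspace ρ)ᗮ :=
    closedConvexHull_min (t := (fixedSubspace ρ)ᗮ)
      (by rintro _ ⟨γ, rfl⟩; exact apply_mem_orthogonal_fixedSubspace ρ hw γ)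
      ((fixedSubspace ρ)ᗮ.restrictScalars ℝ).convex
      (fixedSubspace ρ).isClosed_orthogonal hcC
  rwa [inner_self_eq_zero.mp (hc_orth c hc_fixed)] at hcC

theorem two_mul_norm_sq_le_of_mem_orthogonal [CompleteSpace F] {w : F} {r : ℝ}
    (hw : w ∈ (fixedSubspace ρ)ᗮ) (hr : ∀ γ, ‖ρ γ w - w‖ ≤ r) : 2 * ‖w‖ ^ 2 ≤ r ^ 2 := by
  have horbit : range (fun γ ↦ ρ γ w) ⊆ innerSL ℝ w ⁻¹' Ici (‖w‖ ^ 2 - r ^ 2 / 2) := by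
    rintro _ ⟨γ, rfl⟩
    have hsq := pow_le_pow_left₀ (norm_nonneg _) (hr γ) 2
    rw [norm_sub_sq_real, LinearIsometryEquiv.norm_map] at hsq
    rw [mem_preimage, innerSL_apply_apply, mem_Ici, real_inner_comm]
    linarith
  have := closedConvexHull_min horbit ((convex_Ici _).linear_preimage (innerSL ℝ w).toLinearMap)
    (isClosed_Ici.preimage (innerSL ℝ w).continuous) (zero_mem_closedConvexHull_orbit ρ hw)
  rw [mem_preimage, map_zero, mem_Ici] at this
  linarith

theorem exists_mem_fixedSubspace_sqrt_two_mul_norm_sub_le [CompleteSpace F] {v : F} {r : ℝ}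
    (hv : ∀ γ, ‖ρ γ v - v‖ ≤ r) : ∃ u ∈ fixedSubspace ρ, √2 * ‖u - v‖ ≤ r := by
  set K := fixedSubspace ρ
  have : CompleteSpace K := (isClosed_fixedSubspace ρ).completeSpace_coe
  set u := K.starProjection v
  have hu : u ∈ K := K.starProjection_apply_mem v
  have hdiff (γ : Γ) : ρ γ (v - u) - (v - u) = ρ γ v - v := by rw [map_sub, hu γ]; abel
  have hsq := two_mul_norm_sq_le_of_mem_orthogonal ρ (K.sub_starProjection_mem_orthogonal v)
    fun γ ↦ hdiff γ ▸ hv γ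
  refine ⟨u, hu, (pow_le_pow_iff_left₀ (by positivity) ((norm_nonneg _).trans (hv 1))
    two_ne_zero).mp ?_⟩
  rwa [mul_pow, Real.sq_sqrt zero_le_two, norm_sub_rev]

end FixedVectors

def LinearIsometryEquiv.restrictScalarsHom (R : Type*) {S E : Type*} [Semiring R] [Semiring S]
    [SeminormedAddCommGroup E] [Module R E] [Module S E] [LinearMap.CompatibleSMul E E R S] :
    (E ≃ₗᵢ[S] E) →* (E ≃ₗᵢ[R] E) where
  toFun T := { T.toLinearEquiv.restrictScalars R with norm_map' := T.norm_map }
  map_one' := rfl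
  map_mul' _ _ := rfl

theorem statement19_general {Γ : Type*} [Group Γ] {H : Type*} [NormedAddCommGroup H]
    [InnerProductSpace ℂ H] [FiniteDimensional ℂ H]
    (ρ : Γ →* (H ≃ₗᵢ[ℂ] H)) (ε : ℝ) (v : H)
    (hv : ∀ γ : Γ, ‖ρ γ v - v‖ ≤ ε * ‖v‖) :
    ∃ u : H, (∀ γ : Γ, ρ γ u = u) ∧ ‖u - v‖ ≤ (ε / Real.sqrt 2) * ‖v‖ := by
  let : InnerProductSpace ℝ H := .complexToReal
  obtain ⟨u, hu, hdist⟩ := exists_mem_fixedSubspace_sqrt_two_mul_norm_sub_le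
    ((LinearIsometryEquiv.restrictScalarsHom ℝ).comp ρ) hv
  refine ⟨u, hu, ?_⟩
  rwa [div_mul_eq_mul_div, le_div_iff₀' (by positivity)]

/-- a vector which is uniformly almost invariant under a unitary
representation on a finite-dimensional complex Hilbert space is `(ε/√2)`-close to an
invariant vector. -/
theorem statement19 {Γ : Type*} [Group Γ] {H : Type*} [NormedAddCommGroup H]
    [InnerProductSpace ℂ H] [FiniteDimensional ℂ H]
    (ρ : Γ →* (H ≃ₗᵢ[ℂ] H)) (ε : ℝ) (hε : 0 < ε) (v : H)
    (hv : ∀ γ : Γ, ‖ρ γ v - v‖ ≤ ε * ‖v‖) :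
    ∃ u : H, (∀ γ : Γ, ρ γ u = u) ∧ ‖u - v‖ ≤ (ε / Real.sqrt 2) * ‖v‖ :=
  statement19_general ρ ε v hv
end
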